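/- If A is a nonsingular M-tensor, then its majorization matrix M (with entries M_{ij} = a_{ij...j}) is a nonsingular M-matrix. -/

import Mathlib

/-!
Write `A = s I - B` with `B ≥ 0` and `s > ρ(B)`. A continuous, `p`-homogeneous map `F` that is
strictly monotone on the nonnegative cone has a positive eigenvector: maximise `t` subject to
`t x^[p] ≤ F x` over the simplex; at a maximiser equality must hold, since otherwise the vector
`(F x)^[1/p]` strictly dominates `r^{1/p} x` and allows a larger `t`. This applies to the positive
tensors `B + δ 𝟙`. If no `x > 0` had `B x^p < s x^[p]`, all their Perron eigenvalues would exceed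
`s`, and letting `δ → 0` by compactness would produce an eigenpair of `B` on the simplex with
eigenvalue `≥ s > ρ(B)`. Hence `A x^p > 0` for some `x > 0`, and `y = x^[p]` works for the
majorization matrix: `M y = A x^p + N x^p`, where the mixed-index part `N` of a Z-tensor is
nonnegative.
-/

open Finset Filter

noncomputable section

/-- Action of an order-(p+1) tensor (p trailing indices):
`(A x^{p})_i = ∑ a_{i i₂ … i_{p+1}} x_{i₂} ⋯ x_{i_{p+1}}`. -/
def tapp (p n : ℕ) (A : Fin n → (Fin p → Fin n) → ℝ) (x : Fin n → ℝ) : Fin n → ℝ :=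
  fun i => ∑ js : Fin p → Fin n, A i js * ∏ j, x (js j)

/-- A `Z`-tensor: all off-diagonal entries are nonpositive. -/
def IsZTensor (p n : ℕ) (A : Fin n → (Fin p → Fin n) → ℝ) : Prop :=
  ∀ i js, (∃ j, js j ≠ i) → A i js ≤ 0

/-- The identity tensor. -/
def identT (p n : ℕ) : Fin n → (Fin p → Fin n) → ℝ :=
  fun i js => if ∀ j, js j = i then 1 else 0

/-- Spectral radius of a tensor: sup of moduli of (real) eigenvalues. -/
def tensorSpecRad (p n : ℕ) (B : Fin n → (Fin p → Fin n) → ℝ) : ℝ :=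
  sSup {r : ℝ | ∃ lam : ℝ, ∃ x : Fin n → ℝ, x ≠ 0 ∧
    (∀ i, tapp p n B x i = lam * x i ^ p) ∧ r = |lam|}

/-- A nonsingular M-tensor: `A = s I − B` with `B ≥ 0` and `s > ρ(B)`. -/
def IsMTensor (p n : ℕ) (A : Fin n → (Fin p → Fin n) → ℝ) : Prop :=
  ∃ s : ℝ, ∃ B : Fin n → (Fin p → Fin n) → ℝ,
    (∀ i js, 0 ≤ B i js) ∧ tensorSpecRad p n B < s ∧
    ∀ i js, A i js = s * identT p n i js - B i js

/-- The diagonal-part tensor of `A`. -/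
def diagT (p n : ℕ) (A : Fin n → (Fin p → Fin n) → ℝ) : Fin n → (Fin p → Fin n) → ℝ :=
  fun i js => if ∀ j, js j = i then A i (fun _ => i) else 0

/-- The majorization matrix of `A`: `M_{ij} = a_{i j … j}`. -/
def majMatrix (p n : ℕ) (A : Fin n → (Fin p → Fin n) → ℝ) : Matrix (Fin n) (Fin n) ℝ :=
  fun i j => A i (fun _ => j)

/-- The "mixed index" part `N = M_tensor − A`: zero on constant trailing tuples,
`−A` elsewhere. -/
def NPart (p n : ℕ) (A : Fin n → (Fin p → Fin n) → ℝ) : Fin n → (Fin p → Fin n) → ℝ :=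
  fun i js => if ∀ j' j'', js j' = js j'' then 0 else -A i js

/-- A nonsingular M-matrix: a Z-matrix with `M y > 0` for some `y > 0`. -/
def IsMMatrix (n : ℕ) (P : Matrix (Fin n) (Fin n) ℝ) : Prop :=
  (∀ i j, i ≠ j → P i j ≤ 0) ∧ ∃ y : Fin n → ℝ, (∀ i, 0 < y i) ∧ ∀ i, 0 < P.mulVec y i

/-- Spectral radius of a real matrix (via its complex spectrum). -/
def matSpecRad (n : ℕ) (J : Matrix (Fin n) (Fin n) ℝ) : ℝ :=
  sSup {r : ℝ | ∃ μ ∈ spectrum ℂ (J.map (Complex.ofReal ·)), r = ‖μ‖}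

/-- Irreducibility of a matrix. -/
def MatIrreducible (n : ℕ) (J : Matrix (Fin n) (Fin n) ℝ) : Prop :=
  ∀ S : Finset (Fin n), S.Nonempty → S ≠ Finset.univ → ∃ i ∈ S, ∃ j, j ∉ S ∧ J i j ≠ 0

open Topology

section Homogeneous

variable {ι : Type*} {p : ℕ} {F : (ι → ℝ) → ι → ℝ}

lemma ne_zero_of_mem_stdSimplex [Fintype ι] {x : ι → ℝ} (hx : x ∈ stdSimplex ℝ ι) : x ≠ 0 := by
  rintro rfl
  simpa using hx.2

lemma apply_zero_of_homogeneous (hp : p ≠ 0)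
    (hhom : ∀ (c : ℝ) (x : ι → ℝ), 0 ≤ c → 0 ≤ x → F (c • x) = c ^ p • F x) : F 0 = 0 := by
  simpa [zero_pow hp] using hhom 0 0 le_rfl le_rfl

lemma apply_le_apply_of_strictMono
    (hmono : ∀ x y : ι → ℝ, 0 ≤ x → x ≤ y → x ≠ y → ∀ i, F x i < F y i)
    {x y : ι → ℝ} (hx : 0 ≤ x) (hxy : x ≤ y) (i : ι) : F x i ≤ F y i := by
  rcases eq_or_ne x y with rfl | hne
  · exact le_rfl
  · exact (hmono x y hx hxy hne i).le

lemma apply_pos_of_mem_stdSimplex [Fintype ι] (hp : p ≠ 0)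
    (hhom : ∀ (c : ℝ) (x : ι → ℝ), 0 ≤ c → 0 ≤ x → F (c • x) = c ^ p • F x)
    (hmono : ∀ x y : ι → ℝ, 0 ≤ x → x ≤ y → x ≠ y → ∀ i, F x i < F y i)
    {x : ι → ℝ} (hx : x ∈ stdSimplex ℝ ι) (i : ι) : 0 < F x i := by
  simpa [apply_zero_of_homogeneous hp hhom] using
    hmono 0 x le_rfl hx.1 (ne_zero_of_mem_stdSimplex hx).symm i

lemma exists_le_apply_one_of_mul_pow_le [Fintype ι] [Nonempty ι]
    (hhom : ∀ (c : ℝ) (x : ι → ℝ), 0 ≤ c → 0 ≤ x → F (c • x) = c ^ p • F x)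
    (hmono : ∀ x y : ι → ℝ, 0 ≤ x → x ≤ y → x ≠ y → ∀ i, F x i < F y i)
    {x : ι → ℝ} (hx : x ∈ stdSimplex ℝ ι) {t : ℝ} (ht : ∀ i, t * x i ^ p ≤ F x i) :
    ∃ i, t ≤ F 1 i := by
  obtain ⟨k, -, hk⟩ := exists_max_image univ x univ_nonempty
  have hxk : 0 < x k := by
    by_contra! h
    have : ∑ i, x i ≤ 0 := sum_nonpos fun i _ => (hk i (mem_univ i)).trans h
    linarith [hx.2]
  have hle : x ≤ x k • (1 : ι → ℝ) := fun i => by simpa using hk i (mem_univ i)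
  have h := (ht k).trans (apply_le_apply_of_strictMono hmono hx.1 hle k)
  rw [hhom _ _ hxk.le zero_le_one, Pi.smul_apply, smul_eq_mul, mul_comm t] at h
  exact ⟨k, le_of_mul_le_mul_left h (pow_pos hxk p)⟩

lemma exists_gt_of_mul_pow_lt [Fintype ι] (hp : p ≠ 0)
    (hhom : ∀ (c : ℝ) (x : ι → ℝ), 0 ≤ c → 0 ≤ x → F (c • x) = c ^ p • F x)
    (hmono : ∀ x y : ι → ℝ, 0 ≤ x → x ≤ y → x ≠ y → ∀ i, F x i < F y i)
    {x : ι → ℝ} (hx : x ∈ stdSimplex ℝ ι) {r : ℝ} (hr : 0 ≤ r)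
    (hle : ∀ i, r * x i ^ p ≤ F x i) {i₀ : ι} (hlt : r * x i₀ ^ p < F x i₀) :
    ∃ t > r, ∃ y ∈ stdSimplex ℝ ι, ∀ i, t * y i ^ p ≤ F y i := by
  have hFx := apply_pos_of_mem_stdSimplex hp hhom hmono hx
  set z : ι → ℝ := fun i => F x i ^ (p⁻¹ : ℝ)
  have hz : ∀ i, 0 < z i := fun i => Real.rpow_pos_of_pos (hFx i) _
  have hzp : ∀ i, z i ^ p = F x i := fun i => Real.rpow_inv_natCast_pow (hFx i).le hp
  set c := r ^ (p⁻¹ : ℝ)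
  have hc : 0 ≤ c := Real.rpow_nonneg hr _
  have hcp : c ^ p = r := Real.rpow_inv_natCast_pow hr hp
  have hcx : c • x ≤ z := fun i =>
    (pow_le_pow_iff_left₀ (mul_nonneg hc (hx.1 i)) (hz i).le hp).1
      (by rw [mul_pow, hcp, hzp]; exact hle i)
  have hcx₀ : c * x i₀ < z i₀ :=
    lt_of_pow_lt_pow_left₀ p (hz i₀).le (by rw [mul_pow, hcp, hzp]; exact hlt)
  have hFz : ∀ i, r * z i ^ p < F z i := fun i => by
    have := hmono (c • x) z (smul_nonneg hc hx.1) hcx (fun h => hcx₀.ne (congrFun h i₀)) i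
    rwa [hhom c x hc hx.1, Pi.smul_apply, smul_eq_mul, hcp, ← hzp] at this
  have hev : ∀ᶠ t in 𝓝 r, ∀ i, t * z i ^ p < F z i :=
    eventually_all.2 fun i =>
      (continuous_id.mul continuous_const).continuousAt.eventually_lt continuousAt_const (hFz i)
  obtain ⟨t, hzt, hrt⟩ :=
    ((hev.filter_mono nhdsWithin_le_nhds).and (self_mem_nhdsWithin : Set.Ioi r ∈ 𝓝[>] r)).exists
  have hσ : 0 < ∑ i, z i := sum_pos (fun i _ => hz i) ⟨i₀, mem_univ _⟩
  refine ⟨t, hrt, (∑ i, z i)⁻¹ • z, ⟨fun i => ?_, ?_⟩, fun i => ?_⟩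
  · exact smul_nonneg (inv_nonneg.2 hσ.le) (hz i).le
  · simp [← mul_sum, hσ.ne']
  · rw [hhom _ _ (inv_nonneg.2 hσ.le) fun j => (hz j).le]
    simp only [Pi.smul_apply, smul_eq_mul, mul_pow]
    rw [mul_left_comm]
    exact mul_le_mul_of_nonneg_left (hzt i).le (by positivity)

theorem exists_pos_eigenvector_of_strictMono [Fintype ι] [Nonempty ι] (hp : p ≠ 0)
    (hF : Continuous F)
    (hhom : ∀ (c : ℝ) (x : ι → ℝ), 0 ≤ c → 0 ≤ x → F (c • x) = c ^ p • F x)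
    (hmono : ∀ x y : ι → ℝ, 0 ≤ x → x ≤ y → x ≠ y → ∀ i, F x i < F y i) :
    ∃ r, ∃ x ∈ stdSimplex ℝ ι, (∀ i, 0 < x i) ∧ ∀ i, F x i = r * x i ^ p := by
  classical
  set T := univ.sup' univ_nonempty (F 1)
  set E : Set (ℝ × (ι → ℝ)) :=
    (Set.Icc 0 T ×ˢ stdSimplex ℝ ι) ∩ {q | ∀ i, q.1 * q.2 i ^ p ≤ F q.2 i}
  have hE : IsCompact E := by
    refine (isCompact_Icc.prod (isCompact_stdSimplex ℝ ι)).inter_right ?_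
    simp only [Set.ofPred_forall]
    exact isClosed_iInter fun i => isClosed_le (by fun_prop) (by fun_prop)
  have hmem : ∀ t y, 0 ≤ t → y ∈ stdSimplex ℝ ι → (∀ i, t * y i ^ p ≤ F y i) → (t, y) ∈ E := by
    intro t y ht hy hty
    obtain ⟨k, hk⟩ := exists_le_apply_one_of_mul_pow_le hhom hmono hy hty
    exact ⟨⟨⟨ht, hk.trans (le_sup' _ (mem_univ k))⟩, hy⟩, hty⟩
  obtain ⟨x₀⟩ := ‹Nonempty ι›
  have hE₀ : (0, Pi.single x₀ 1) ∈ E :=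
    hmem 0 _ le_rfl (single_mem_stdSimplex ℝ x₀) fun i => by
      simpa [zero_pow hp] using
        (apply_pos_of_mem_stdSimplex hp hhom hmono (single_mem_stdSimplex ℝ x₀) i).le
  obtain ⟨⟨r, x⟩, ⟨⟨hr, hx⟩, hrx⟩, hmax⟩ := hE.exists_isMaxOn ⟨_, hE₀⟩ continuous_fst.continuousOn
  dsimp only at hr hx hrx
  have heq : ∀ i, F x i = r * x i ^ p := by
    by_contra! h
    obtain ⟨i₀, hi₀⟩ := h
    obtain ⟨t, hrt, y, hy, hty⟩ :=
      exists_gt_of_mul_pow_lt hp hhom hmono hx hr.1 hrx (lt_of_le_of_ne (hrx i₀) hi₀.symm)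
    exact (hmax (hmem t y (hr.1.trans hrt.le) hy hty)).not_gt hrt
  refine ⟨r, x, hx, fun i => (hx.1 i).lt_of_ne' fun h => ?_, heq⟩
  have := apply_pos_of_mem_stdSimplex hp hhom hmono hx i
  rw [heq i, h, zero_pow hp, mul_zero] at this
  exact this.false

end Homogeneous

section Tensor

variable {p n : ℕ}

lemma tapp_add_left (A B : Fin n → (Fin p → Fin n) → ℝ) (x : Fin n → ℝ) :
    tapp p n (A + B) x = tapp p n A x + tapp p n B x := by
  ext i
  simp [tapp, add_mul, sum_add_distrib]

lemma tapp_sub_left (A B : Fin n → (Fin p → Fin n) → ℝ) (x : Fin n → ℝ) :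
    tapp p n (A - B) x = tapp p n A x - tapp p n B x := by
  ext i
  simp [tapp, sub_mul, sum_sub_distrib]

lemma tapp_smul_left (c : ℝ) (A : Fin n → (Fin p → Fin n) → ℝ) (x : Fin n → ℝ) :
    tapp p n (c • A) x = c • tapp p n A x := by
  ext i
  simp [tapp, mul_sum, mul_assoc]

lemma tapp_smul_right (A : Fin n → (Fin p → Fin n) → ℝ) (c : ℝ) (x : Fin n → ℝ) :
    tapp p n A (c • x) = c ^ p • tapp p n A x := by
  ext i
  simp [tapp, mul_sum, prod_mul_distrib, mul_left_comm]

lemma tapp_identT (x : Fin n → ℝ) (i : Fin n) : tapp p n (identT p n) x i = x i ^ p := by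
  simp [tapp, identT, ← funext_iff]

lemma continuous_tapp (A : Fin n → (Fin p → Fin n) → ℝ) : Continuous (tapp p n A) := by
  unfold tapp
  fun_prop

lemma tapp_nonneg {A : Fin n → (Fin p → Fin n) → ℝ} (hA : ∀ i js, 0 ≤ A i js)
    {x : Fin n → ℝ} (hx : 0 ≤ x) (i : Fin n) : 0 ≤ tapp p n A x i :=
  sum_nonneg fun js _ => mul_nonneg (hA i js) (prod_nonneg fun _ _ => hx _)

lemma tapp_lt_tapp (hp : p ≠ 0) {C : Fin n → (Fin p → Fin n) → ℝ} (hC : ∀ i js, 0 < C i js)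
    {x y : Fin n → ℝ} (hx : 0 ≤ x) (hxy : x ≤ y) (hne : x ≠ y) (i : Fin n) :
    tapp p n C x i < tapp p n C y i := by
  obtain ⟨k, hk⟩ : ∃ k, x k < y k := by
    by_contra! h
    exact hne (le_antisymm hxy h)
  refine sum_lt_sum (fun js _ => ?_) ⟨fun _ => k, mem_univ _, ?_⟩
  · exact mul_le_mul_of_nonneg_left
      (prod_le_prod (fun _ _ => hx _) fun _ _ => hxy _) (hC i js).le
  · simpa [hC i] using pow_lt_pow_left₀ hk (hx k) hp

lemma abs_tapp_le (A : Fin n → (Fin p → Fin n) → ℝ) {x : Fin n → ℝ} {c : ℝ}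
    (hx : ∀ j, |x j| ≤ c) (i : Fin n) :
    |tapp p n A x i| ≤ (∑ js, |A i js|) * c ^ p := by
  rw [sum_mul]
  refine (abs_sum_le_sum_abs _ _).trans (sum_le_sum fun js _ => ?_)
  rw [abs_mul, abs_prod]
  refine mul_le_mul_of_nonneg_left ?_ (abs_nonneg _)
  simpa using prod_le_prod (s := univ) (fun j _ => abs_nonneg _) fun j _ => hx (js j)

lemma abs_le_of_tapp_eq {A : Fin n → (Fin p → Fin n) → ℝ} {x : Fin n → ℝ} (hx : x ≠ 0)
    {lam : ℝ} (heig : ∀ i, tapp p n A x i = lam * x i ^ p) :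
    |lam| ≤ ∑ i, ∑ js, |A i js| := by
  obtain ⟨i₀, hi₀⟩ := Function.ne_iff.1 hx
  obtain ⟨k, -, hk⟩ := exists_max_image univ (fun i => |x i|) ⟨i₀, mem_univ _⟩
  have hxk : 0 < |x k| := (abs_pos.2 hi₀).trans_le (hk i₀ (mem_univ _))
  have h := abs_tapp_le A (fun j => hk j (mem_univ j)) k
  rw [heig, abs_mul, abs_pow] at h
  exact (le_of_mul_le_mul_right h (pow_pos hxk p)).trans
    (single_le_sum (f := fun i => ∑ js, |A i js|) (fun i _ => sum_nonneg fun _ _ => abs_nonneg _)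
      (mem_univ k))

lemma abs_le_tensorSpecRad {A : Fin n → (Fin p → Fin n) → ℝ} {x : Fin n → ℝ} (hx : x ≠ 0)
    {lam : ℝ} (heig : ∀ i, tapp p n A x i = lam * x i ^ p) :
    |lam| ≤ tensorSpecRad p n A :=
  le_csSup ⟨_, by rintro _ ⟨lam, x, hx, heig, rfl⟩; exact abs_le_of_tapp_eq hx heig⟩
    ⟨lam, x, hx, heig, rfl⟩

theorem exists_pos_eigenvector_of_pos [Nonempty (Fin n)] (hp : p ≠ 0)
    {C : Fin n → (Fin p → Fin n) → ℝ} (hC : ∀ i js, 0 < C i js) :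
    ∃ r, ∃ x ∈ stdSimplex ℝ (Fin n), (∀ i, 0 < x i) ∧ ∀ i, tapp p n C x i = r * x i ^ p :=
  exists_pos_eigenvector_of_strictMono hp (continuous_tapp C)
    (fun c x _ _ => tapp_smul_right C c x) fun _ _ hx hxy hne => tapp_lt_tapp hp hC hx hxy hne

end Tensor

section MTensor

variable {p n : ℕ}

theorem exists_eigenvalue_ge_of_forall_exists_le [Nonempty (Fin n)] (hp : p ≠ 0)
    {B : Fin n → (Fin p → Fin n) → ℝ} (hB : ∀ i js, 0 ≤ B i js) {s : ℝ}
    (h : ∀ x : Fin n → ℝ, (∀ i, 0 < x i) → ∃ i, s * x i ^ p ≤ tapp p n B x i) :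
    ∃ lam ≥ s, ∃ x ∈ stdSimplex ℝ (Fin n), ∀ i, tapp p n B x i = lam * x i ^ p := by
  set T := ∑ i, ∑ js : Fin p → Fin n, (|B i js| + 1)
  -- the eigenpairs of `B + δ • 1`; the projection to `δ` is closed and contains `(0, 1]`
  set Z : Set (ℝ × ℝ × (Fin n → ℝ)) :=
    (Set.Icc 0 1 ×ˢ Set.Icc s T ×ˢ stdSimplex ℝ (Fin n)) ∩
      {q | ∀ i, tapp p n B q.2.2 i + q.1 * tapp p n 1 q.2.2 i = q.2.1 * q.2.2 i ^ p}
  have hZ : IsCompact Z := by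
    refine (isCompact_Icc.prod (isCompact_Icc.prod (isCompact_stdSimplex ℝ _))).inter_right ?_
    simp only [Set.ofPred_forall]
    have := continuous_tapp B
    have := continuous_tapp (1 : Fin n → (Fin p → Fin n) → ℝ)
    exact isClosed_iInter fun i => isClosed_eq (by fun_prop) (by fun_prop)
  have hperturb : Set.Ioc 0 1 ⊆ Prod.fst '' Z := by
    rintro δ ⟨hδ, hδ1⟩
    obtain ⟨r, x, hx, hxpos, heig⟩ :=
      exists_pos_eigenvector_of_pos hp (C := B + δ • 1) fun i js => by
        simpa using add_pos_of_nonneg_of_pos (hB i js) hδ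
    have hr : r ≤ T := by
      refine (le_abs_self r).trans ((abs_le_of_tapp_eq (ne_zero_of_mem_stdSimplex hx) heig).trans
        (sum_le_sum fun i _ => sum_le_sum fun js _ => ?_))
      simpa using (abs_add_le (B i js) δ).trans (by rw [abs_of_pos hδ]; linarith)
    simp only [tapp_add_left, tapp_smul_left, Pi.add_apply, Pi.smul_apply, smul_eq_mul] at heig
    obtain ⟨i, hi⟩ := h x hxpos
    have hs : s < r := by
      have : 0 < δ * tapp p n 1 x i :=
        mul_pos hδ (sum_pos (fun js _ => by simpa using prod_pos fun j _ => hxpos (js j))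
          univ_nonempty)
      exact lt_of_mul_lt_mul_right (by linarith [heig i]) (pow_pos (hxpos i) p).le
    exact ⟨(δ, r, x), ⟨⟨⟨hδ.le, hδ1⟩, ⟨hs.le, hr⟩, hx⟩, heig⟩, rfl⟩
  have h₀ : (0 : ℝ) ∈ Prod.fst '' Z := by
    refine (hZ.image continuous_fst).isClosed.closure_subset_iff.2 hperturb ?_
    rw [closure_Ioc zero_ne_one]
    exact Set.left_mem_Icc.2 zero_le_one
  obtain ⟨⟨_, lam, x⟩, ⟨⟨-, hlam, hx⟩, heig⟩, rfl⟩ := h₀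
  exact ⟨lam, hlam.1, x, hx, by simpa using heig⟩

theorem IsMTensor.exists_pos_tapp_pos (hp : p ≠ 0) {A : Fin n → (Fin p → Fin n) → ℝ}
    (hA : IsMTensor p n A) : ∃ x : Fin n → ℝ, (∀ i, 0 < x i) ∧ ∀ i, 0 < tapp p n A x i := by
  obtain ⟨s, B, hB, hρ, hAB⟩ := hA
  have htapp : ∀ x i, tapp p n A x i = s * x i ^ p - tapp p n B x i := fun x i => by
    rw [show A = s • identT p n - B from funext₂ hAB, tapp_sub_left, tapp_smul_left]
    simp [tapp_identT]
  rcases isEmpty_or_nonempty (Fin n) with hn | hn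
  · exact ⟨0, isEmptyElim, isEmptyElim⟩
  by_contra! hcon
  obtain ⟨lam, hlam, x, hx, heig⟩ := exists_eigenvalue_ge_of_forall_exists_le hp hB fun x hx =>
    (hcon x hx).imp fun i hi => by linarith [htapp x i]
  linarith [abs_le_tensorSpecRad (ne_zero_of_mem_stdSimplex hx) heig, le_abs_self lam]

lemma IsMTensor.isZTensor {A : Fin n → (Fin p → Fin n) → ℝ} (hA : IsMTensor p n A) :
    IsZTensor p n A := by
  obtain ⟨s, B, hB, -, hAB⟩ := hA
  rintro i js ⟨j, hj⟩
  have : ¬ ∀ j, js j = i := fun h => hj (h j)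
  simpa [hAB, identT, this] using hB i js

lemma IsZTensor.NPart_nonneg {A : Fin n → (Fin p → Fin n) → ℝ} (hA : IsZTensor p n A)
    (i : Fin n) (js : Fin p → Fin n) : 0 ≤ NPart p n A i js := by
  unfold NPart
  split_ifs with h
  · exact le_rfl
  · simp only [not_forall] at h
    obtain ⟨j', j'', hj⟩ := h
    exact neg_nonneg.2 (hA i js (by by_contra! h'; exact hj ((h' j').trans (h' j'').symm)))

lemma IsZTensor.majMatrix_apply_nonpos (hp : p ≠ 0) {A : Fin n → (Fin p → Fin n) → ℝ}
    (hA : IsZTensor p n A) {i j : Fin n} (hij : i ≠ j) : majMatrix p n A i j ≤ 0 :=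
  hA i _ ⟨⟨0, Nat.pos_of_ne_zero hp⟩, hij.symm⟩

lemma majMatrix_mulVec_pow (hp : p ≠ 0) (A : Fin n → (Fin p → Fin n) → ℝ) (x : Fin n → ℝ)
    (i : Fin n) :
    (majMatrix p n A).mulVec (fun j => x j ^ p) i =
      tapp p n A x i + tapp p n (NPart p n A) x i := by
  have hconst : univ.filter (fun js : Fin p → Fin n => ∀ j' j'', js j' = js j'') =
      univ.image fun j _ => j := by
    ext js
    simp only [mem_filter, mem_univ, true_and, mem_image]
    refine ⟨fun h => ⟨js ⟨0, Nat.pos_of_ne_zero hp⟩, funext fun j => h _ _⟩, ?_⟩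
    rintro ⟨j, rfl⟩ _ _
    rfl
  have hinj : Function.Injective fun (j : Fin n) (_ : Fin p) => j :=
    fun j k h => congrFun h ⟨0, Nat.pos_of_ne_zero hp⟩
  rw [← Pi.add_apply (tapp p n A x), ← tapp_add_left]
  simp only [tapp, Matrix.mulVec, dotProduct, majMatrix, Pi.add_apply, NPart, add_ite, add_zero,
    add_neg_cancel, ite_mul, zero_mul]
  rw [← sum_filter, hconst, sum_image fun j _ k _ h => hinj h]
  simp [prod_const]

end MTensor

/-- the majorization matrix of a nonsingular M-tensor is a nonsingular
M-matrix. -/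
theorem stmt19 (m n : ℕ) (hm : 2 ≤ m) (A : Fin n → (Fin (m-1) → Fin n) → ℝ)
    (hA : IsMTensor (m-1) n A) :
    IsMMatrix n (majMatrix (m-1) n A) := by
  have hp : m - 1 ≠ 0 := by omega
  obtain ⟨x, hx, hAx⟩ := hA.exists_pos_tapp_pos hp
  refine ⟨fun _ _ hij => hA.isZTensor.majMatrix_apply_nonpos hp hij, fun j => x j ^ (m - 1),
    fun j => pow_pos (hx j) _, fun i => ?_⟩
  rw [majMatrix_mulVec_pow hp]
  exact add_pos_of_pos_of_nonneg (hAx i)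
    (tapp_nonneg hA.isZTensor.NPart_nonneg (fun j => (hx j).le) i)

end
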